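/- arXiv:2202.07974 — 3 statements merged into one kernel-verified Lean document; each statement's English description precedes it below -/
import Mathlib

section
/- The set 𝒱 is open in the metric space (C⁰_r(𝕋,S⁰_cl), d^{0,0}): for every v ∈ 𝒱 there exists ε > 0 such that every w ∈ C⁰_r(𝕋,S⁰_cl) with d^{0,0}(v,w) < ε also belongs to 𝒱. -/
open Real MeasureTheory Filter Topology

noncomputable section

/-- Partial derivative in the first variable `x`. -/
def pdx (f : ℝ × ℝ → ℝ) : ℝ × ℝ → ℝ := fun p => fderiv ℝ f p (1, 0)

/-- Partial derivative in the second variable `ξ`. -/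
def pdxi (f : ℝ × ℝ → ℝ) : ℝ × ℝ → ℝ := fun p => fderiv ℝ f p (0, 1)

/-- Poisson bracket `{f,g} = ∂_ξ f ∂_x g − ∂_x f ∂_ξ g`. -/
def pbr (f g : ℝ × ℝ → ℝ) : ℝ × ℝ → ℝ :=
  fun p => pdxi f p * pdx g p - pdx f p * pdxi g p

/-- Harmonic oscillator symbol `h₀(x,ξ) = (x²+ξ²)/2`. -/
def h0 : ℝ × ℝ → ℝ := fun p => (p.1 ^ 2 + p.2 ^ 2) / 2

/-- The harmonic flow `φᵗ`. -/
def flow (t : ℝ) (p : ℝ × ℝ) : ℝ × ℝ :=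
  (p.1 * Real.cos t + p.2 * Real.sin t, -p.1 * Real.sin t + p.2 * Real.cos t)

/-- Resonant average `⟨v⟩(x,ξ) = (1/2π)∫₀^{2π} v(t,φᵗ(x,ξ)) dt`. -/
def resAvg (v : ℝ → ℝ × ℝ → ℝ) : ℝ × ℝ → ℝ :=
  fun p => (1 / (2 * π)) * ∫ t in (0:ℝ)..(2 * π), v t (flow t p)

/-- Positively homogeneous of degree `0`. -/
def PosHomog0 (f : ℝ × ℝ → ℝ) : Prop :=
  ∀ (lam : ℝ) (p : ℝ × ℝ), 1 ≤ lam → 1 ≤ p.1 ^ 2 + p.2 ^ 2 →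
    f (lam * p.1, lam * p.2) = f p

/-- Membership in `C⁰(𝕋, S^ρ)` (real valued): 2π-periodicity and continuity in `t`,
smoothness in `(x,ξ)`, and uniform symbol bounds of order `ρ`. -/
def InC0S (ρ : ℝ) (v : ℝ → ℝ × ℝ → ℝ) : Prop :=
  (∀ t p, v (t + 2 * π) p = v t p) ∧
  Continuous (fun q : ℝ × (ℝ × ℝ) => v q.1 q.2) ∧
  (∀ t, ContDiff ℝ (⊤ : ℕ∞) (v t)) ∧
  ∀ α β : ℕ, ∃ C > 0, ∀ (t : ℝ) (p : ℝ × ℝ),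
    |pdx^[α] (pdxi^[β] (v t)) p| ≤
      C * (1 + p.1 ^ 2 + p.2 ^ 2) ^ (ρ - ((α : ℝ) + β) / 2)

/-- Membership in `C⁰_r(𝕋, S⁰_cl)`: a real valued family in `C⁰(𝕋,S⁰)` admitting a
principal symbol `v₀(t,·)`, smooth and positively homogeneous of degree 0, with
`v − v₀ ∈ C⁰(𝕋, S^μ)` for some `μ < 0`. -/
def InC0Scl (v : ℝ → ℝ × ℝ → ℝ) : Prop :=
  InC0S 0 v ∧ ∃ (v0 : ℝ → ℝ × ℝ → ℝ) (μ : ℝ), μ < 0 ∧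
    (∀ t, ContDiff ℝ (⊤ : ℕ∞) (v0 t)) ∧ (∀ t, PosHomog0 (v0 t)) ∧
    InC0S μ (fun t p => v t p - v0 t p)

/-- The set `𝒱`: classical symbols whose principal symbol `v₀` fulfills
`{⟨v₀⟩, h₀} ≢ 0` on `x²+ξ² ≥ 1`. -/
def InV (v : ℝ → ℝ × ℝ → ℝ) : Prop :=
  InC0S 0 v ∧ ∃ (v0 : ℝ → ℝ × ℝ → ℝ) (μ : ℝ), μ < 0 ∧
    (∀ t, ContDiff ℝ (⊤ : ℕ∞) (v0 t)) ∧ (∀ t, PosHomog0 (v0 t)) ∧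
    InC0S μ (fun t p => v t p - v0 t p) ∧
    ∃ p : ℝ × ℝ, 1 ≤ p.1 ^ 2 + p.2 ^ 2 ∧ pbr (resAvg v0) h0 p ≠ 0

/-- The seminorm `℘_j^{0,0}`. -/
def sem00 (j : ℕ) (f : ℝ → ℝ × ℝ → ℝ) : ℝ :=
  ∑ α ∈ Finset.range (j + 1), ∑ β ∈ Finset.range (j + 1 - α),
    ⨆ q : ℝ × (ℝ × ℝ),
      |pdx^[α] (pdxi^[β] (f q.1)) q.2| *
        (1 + q.2.1 ^ 2 + q.2.2 ^ 2) ^ (((α : ℝ) + β) / 2)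

/-- The distance `d^{0,0}`. -/
def dist00 (f g : ℝ → ℝ × ℝ → ℝ) : ℝ :=
  ∑' j : ℕ, (1 / 2 ^ j) *
    (sem00 j (fun t p => f t p - g t p) / (1 + sem00 j (fun t p => f t p - g t p)))


namespace VOpen

lemma flow_zero (p : ℝ × ℝ) : flow 0 p = p := by simp [flow]

lemma flow_sq' (t : ℝ) (p : ℝ × ℝ) :
    (flow t p).1 ^ 2 + (flow t p).2 ^ 2 = p.1 ^ 2 + p.2 ^ 2 := by
  have h := Real.sin_sq_add_cos_sq t
  simp only [flow]
  nlinarith [h]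

def rotCLM (t : ℝ) : (ℝ × ℝ) →L[ℝ] (ℝ × ℝ) :=
  ((Real.cos t • ContinuousLinearMap.fst ℝ ℝ ℝ + Real.sin t • ContinuousLinearMap.snd ℝ ℝ ℝ).prod
   ((-Real.sin t) • ContinuousLinearMap.fst ℝ ℝ ℝ + Real.cos t • ContinuousLinearMap.snd ℝ ℝ ℝ))

lemma rotCLM_apply (t : ℝ) (e : ℝ × ℝ) :
    rotCLM t e = (e.1 * Real.cos t + e.2 * Real.sin t, -e.1 * Real.sin t + e.2 * Real.cos t) := by
  simp [rotCLM, ContinuousLinearMap.prod_apply, Prod.ext_iff]; constructor <;> ring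

lemma flow_eq_rot (t : ℝ) (p : ℝ × ℝ) : flow t p = rotCLM t p := by
  rw [rotCLM_apply]; rfl

lemma hasDerivAt_flow (p : ℝ × ℝ) (s : ℝ) :
    HasDerivAt (fun s => flow s p) ((flow s p).2, -(flow s p).1) s := by
  have h1 : HasDerivAt (fun s => p.1 * Real.cos s + p.2 * Real.sin s)
      (-p.1 * Real.sin s + p.2 * Real.cos s) s := by
    have := ((Real.hasDerivAt_cos s).const_mul p.1).add ((Real.hasDerivAt_sin s).const_mul p.2)
    exact this.congr_deriv (by ring)
  have h2 : HasDerivAt (fun s => -p.1 * Real.sin s + p.2 * Real.cos s)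
      (-(p.1 * Real.cos s + p.2 * Real.sin s)) s := by
    have := ((Real.hasDerivAt_sin s).const_mul (-p.1)).add ((Real.hasDerivAt_cos s).const_mul p.2)
    exact this.congr_deriv (by ring)
  exact h1.prodMk h2

lemma fderiv_apply_pd (f : ℝ × ℝ → ℝ) (p e : ℝ × ℝ) :
    fderiv ℝ f p e = e.1 * pdx f p + e.2 * pdxi f p := by
  have he : e = e.1 • ((1:ℝ), (0:ℝ)) + e.2 • ((0:ℝ), (1:ℝ)) := by
    simp [Prod.ext_iff]
  conv_lhs => rw [he]
  rw [map_add, ContinuousLinearMap.map_smul, ContinuousLinearMap.map_smul]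
  simp [pdx, pdxi, smul_eq_mul]

lemma hasFDerivAt_h0 (p : ℝ × ℝ) :
    HasFDerivAt h0 (p.1 • ContinuousLinearMap.fst ℝ ℝ ℝ + p.2 • ContinuousLinearMap.snd ℝ ℝ ℝ) p := by
  have h1 : HasFDerivAt (fun q : ℝ × ℝ => (1/2) * (q.1 * q.1 + q.2 * q.2))
      ((1/2 : ℝ) • (p.1 • ContinuousLinearMap.fst ℝ ℝ ℝ + p.1 • ContinuousLinearMap.fst ℝ ℝ ℝ +
        (p.2 • ContinuousLinearMap.snd ℝ ℝ ℝ + p.2 • ContinuousLinearMap.snd ℝ ℝ ℝ))) p :=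
    ((hasFDerivAt_fst.mul hasFDerivAt_fst).add (hasFDerivAt_snd.mul hasFDerivAt_snd)).const_mul (1/2)
  have he : h0 = fun q : ℝ × ℝ => (1/2) * (q.1 * q.1 + q.2 * q.2) := by
    funext q; simp [h0]; ring
  rw [he]
  convert h1 using 1
  ext <;> simp <;> ring

lemma pdx_h0 (p : ℝ × ℝ) : pdx h0 p = p.1 := by
  rw [pdx, (hasFDerivAt_h0 p).fderiv]; simp

lemma pdxi_h0 (p : ℝ × ℝ) : pdxi h0 p = p.2 := by
  rw [pdxi, (hasFDerivAt_h0 p).fderiv]; simp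

lemma pbr_h0_eq (f : ℝ × ℝ → ℝ) (p : ℝ × ℝ) :
    pbr f h0 p = pdxi f p * p.1 - pdx f p * p.2 := by
  rw [pbr, pdx_h0, pdxi_h0]

lemma differentiableAt_of_pbr_ne (f : ℝ × ℝ → ℝ) (p : ℝ × ℝ)
    (h : pbr f h0 p ≠ 0) : DifferentiableAt ℝ f p := by
  by_contra hd
  have h0' := fderiv_zero_of_not_differentiableAt hd
  apply h
  rw [pbr_h0_eq, pdx, pdxi, h0']
  simp

lemma hasDerivAt_along (f : ℝ × ℝ → ℝ) (p : ℝ × ℝ) (s : ℝ)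
    (hf : DifferentiableAt ℝ f (flow s p)) :
    HasDerivAt (fun s => f (flow s p)) (-(pbr f h0 (flow s p))) s := by
  have h := hf.hasFDerivAt.comp_hasDerivAt s (hasDerivAt_flow p s)
  have heq : fderiv ℝ f (flow s p) ((flow s p).2, -(flow s p).1) = -(pbr f h0 (flow s p)) := by
    rw [fderiv_apply_pd, pbr_h0_eq]; ring
  rw [heq] at h
  exact h

lemma sem00_nonneg (j : ℕ) (f : ℝ → ℝ × ℝ → ℝ) : 0 ≤ sem00 j f := by
  apply Finset.sum_nonneg; intro α _
  apply Finset.sum_nonneg; intro β _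
  apply Real.iSup_nonneg; intro q
  positivity

lemma sem00_zero_eq (f : ℝ → ℝ × ℝ → ℝ) :
    sem00 0 f = ⨆ q : ℝ × (ℝ × ℝ), |f q.1 q.2| := by
  simp [sem00]

lemma sup_lt_of_dist00_lt {v w : ℝ → ℝ × ℝ → ℝ} {δ Cv Cw : ℝ} (hδ : 0 < δ)
    (hv : ∀ t p, |v t p| ≤ Cv) (hw : ∀ t p, |w t p| ≤ Cw)
    (hd : dist00 v w < δ / (1 + δ)) :
    ∀ t p, |v t p - w t p| < δ := by
  set s := sem00 0 (fun t p => v t p - w t p) with hs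
  have hsnn : 0 ≤ s := sem00_nonneg 0 _
  have hsum : Summable (fun j : ℕ => (1 / 2 ^ j : ℝ) *
      (sem00 j (fun t p => v t p - w t p) / (1 + sem00 j (fun t p => v t p - w t p)))) := by
    apply Summable.of_nonneg_of_le (fun j => ?_) (fun j => ?_) summable_geometric_two
    · have := sem00_nonneg j (fun t p => v t p - w t p)
      positivity
    · have h1 := sem00_nonneg j (fun t p => v t p - w t p)
      have h2 : sem00 j (fun t p => v t p - w t p) /
          (1 + sem00 j (fun t p => v t p - w t p)) ≤ 1 := by
        rw [div_le_one (by linarith)]; linarith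
      calc (1 / 2 ^ j : ℝ) * _ ≤ (1 / 2 ^ j : ℝ) * 1 := by
            apply mul_le_mul_of_nonneg_left h2; positivity
        _ = (1 / 2 : ℝ) ^ j := by rw [mul_one, one_div, one_div, inv_pow]
  have hterm : (1 / 2 ^ (0:ℕ) : ℝ) * (s / (1 + s)) ≤ dist00 v w := by
    apply Summable.le_tsum hsum 0
    intro j _
    have := sem00_nonneg j (fun t p => v t p - w t p)
    positivity
  have hlt : s / (1 + s) < δ / (1 + δ) := by
    simpa using lt_of_le_of_lt hterm hd
  have hslt : s < δ := by
    rw [div_lt_div_iff₀ (by linarith) (by linarith)] at hlt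
    nlinarith
  intro t p
  have hble : |v t p - w t p| ≤ s := by
    rw [hs, sem00_zero_eq]
    have hbdd : BddAbove (Set.range fun q : ℝ × (ℝ × ℝ) => |v q.1 q.2 - w q.1 q.2|) := by
      refine ⟨Cv + Cw, ?_⟩
      rintro x ⟨q, rfl⟩
      calc |v q.1 q.2 - w q.1 q.2| ≤ |v q.1 q.2| + |w q.1 q.2| := abs_sub _ _
        _ ≤ Cv + Cw := add_le_add (hv _ _) (hw _ _)
    exact le_ciSup hbdd (t, p)
  linarith

lemma InC0S_zeroth {μ : ℝ} {r : ℝ → ℝ × ℝ → ℝ} (hr : InC0S μ r) :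
    ∃ C > 0, ∀ t p, |r t p| ≤ C * (1 + p.1 ^ 2 + p.2 ^ 2) ^ μ := by
  obtain ⟨C, hC, hb⟩ := hr.2.2.2 0 0
  refine ⟨C, hC, fun t p => ?_⟩
  have := hb t p
  simpa using this

lemma InC0S_bounded {v : ℝ → ℝ × ℝ → ℝ} (hv : InC0S 0 v) :
    ∃ C > 0, ∀ t p, |v t p| ≤ C := by
  obtain ⟨C, hC, hb⟩ := InC0S_zeroth hv
  refine ⟨C, hC, fun t p => ?_⟩
  have h1 := hb t p
  have h2 : (1 + p.1 ^ 2 + p.2 ^ 2 : ℝ) ^ (0:ℝ) = 1 := Real.rpow_zero _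
  rw [h2, mul_one] at h1
  exact h1

lemma homog_close {v w v0 w0 : ℝ → ℝ × ℝ → ℝ} {μv μw δ : ℝ} (hμv : μv < 0) (hμw : μw < 0)
    (hv0 : ∀ t, PosHomog0 (v0 t)) (hw0 : ∀ t, PosHomog0 (w0 t))
    (hrv : InC0S μv (fun t p => v t p - v0 t p)) (hrw : InC0S μw (fun t p => w t p - w0 t p))
    (hvw : ∀ t p, |v t p - w t p| ≤ δ) :
    ∀ (t : ℝ) (z : ℝ × ℝ), 1 ≤ z.1 ^ 2 + z.2 ^ 2 → |v0 t z - w0 t z| ≤ δ := by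
  obtain ⟨Cv, hCv, hbv⟩ := InC0S_zeroth hrv
  obtain ⟨Cw, hCw, hbw⟩ := InC0S_zeroth hrw
  intro t z hz
  have key : ∀ lam : ℝ, 1 ≤ lam →
      |v0 t z - w0 t z| ≤ δ + Cv * lam ^ (2 * μv) + Cw * lam ^ (2 * μw) := by
    intro lam hlam
    have hlam0 : (0:ℝ) < lam := by linarith
    set q : ℝ × ℝ := (lam * z.1, lam * z.2) with hq
    have hbase : lam ^ (2:ℕ) ≤ 1 + q.1 ^ 2 + q.2 ^ 2 := by
      simp only [hq]
      nlinarith [sq_nonneg lam, sq_nonneg z.1, sq_nonneg z.2]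
    have hrpow : ∀ μ : ℝ, μ < 0 → (1 + q.1 ^ 2 + q.2 ^ 2) ^ μ ≤ lam ^ (2 * μ) := by
      intro μ hμ
      have h1 : (1 + q.1 ^ 2 + q.2 ^ 2 : ℝ) ^ μ ≤ (lam ^ (2:ℕ)) ^ μ :=
        Real.rpow_le_rpow_of_nonpos (by positivity) hbase (le_of_lt hμ)
      calc (1 + q.1 ^ 2 + q.2 ^ 2 : ℝ) ^ μ ≤ (lam ^ (2:ℕ)) ^ μ := h1
        _ = lam ^ (2 * μ) := by
            rw [← Real.rpow_natCast lam 2, ← Real.rpow_mul (le_of_lt hlam0)]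
            norm_num
    have hv0q : v0 t q = v0 t z := hv0 t lam z hlam hz
    have hw0q : w0 t q = w0 t z := hw0 t lam z hlam hz
    have habs : |v0 t z - w0 t z| ≤ |v t q - w t q| + |v t q - v0 t q| + |w t q - w0 t q| := by
      rw [← hv0q, ← hw0q]
      have hexp : v0 t q - w0 t q = (v t q - w t q) - (v t q - v0 t q) + (w t q - w0 t q) := by ring
      rw [hexp]
      calc |(v t q - w t q) - (v t q - v0 t q) + (w t q - w0 t q)|
          ≤ |(v t q - w t q) - (v t q - v0 t q)| + |w t q - w0 t q| := abs_add_le _ _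
        _ ≤ |v t q - w t q| + |v t q - v0 t q| + |w t q - w0 t q| := by
            have := abs_sub (v t q - w t q) (v t q - v0 t q)
            linarith
    have h2 : |v t q - v0 t q| ≤ Cv * lam ^ (2 * μv) := by
      calc |v t q - v0 t q| ≤ Cv * (1 + q.1 ^ 2 + q.2 ^ 2) ^ μv := hbv t q
        _ ≤ Cv * lam ^ (2 * μv) := by
            apply mul_le_mul_of_nonneg_left (hrpow μv hμv) (le_of_lt hCv)
    have h3 : |w t q - w0 t q| ≤ Cw * lam ^ (2 * μw) := by
      calc |w t q - w0 t q| ≤ Cw * (1 + q.1 ^ 2 + q.2 ^ 2) ^ μw := hbw t q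
        _ ≤ Cw * lam ^ (2 * μw) := by
            apply mul_le_mul_of_nonneg_left (hrpow μw hμw) (le_of_lt hCw)
    have h1 := hvw t q
    linarith
  have htend : Tendsto (fun lam : ℝ => δ + Cv * lam ^ (2 * μv) + Cw * lam ^ (2 * μw))
      atTop (nhds δ) := by
    have t1 : Tendsto (fun lam : ℝ => lam ^ (2 * μv)) atTop (nhds 0) := by
      have := tendsto_rpow_neg_atTop (y := -(2 * μv)) (by linarith)
      simpa using this
    have t2 : Tendsto (fun lam : ℝ => lam ^ (2 * μw)) atTop (nhds 0) := by
      have := tendsto_rpow_neg_atTop (y := -(2 * μw)) (by linarith)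
      simpa using this
    have := (tendsto_const_nhds (x := δ) (f := atTop)).add
      ((t1.const_mul Cv).add (t2.const_mul Cw))
    simpa [add_assoc] using this
  exact ge_of_tendsto htend (eventually_atTop.2 ⟨1, fun lam hlam => key lam hlam⟩)

lemma abs_resAvg_sub_le {u u' : ℝ → ℝ × ℝ → ℝ} {δ : ℝ}
    (hu : Continuous fun q : ℝ × (ℝ × ℝ) => u q.1 q.2)
    (hu' : Continuous fun q : ℝ × (ℝ × ℝ) => u' q.1 q.2)
    (q : ℝ × ℝ)
    (hb : ∀ (t : ℝ) (z : ℝ × ℝ), z.1 ^ 2 + z.2 ^ 2 = q.1 ^ 2 + q.2 ^ 2 →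
      |u t z - u' t z| ≤ δ) :
    |resAvg u q - resAvg u' q| ≤ δ := by
  have hpi := Real.pi_pos
  have hcf : Continuous (fun t : ℝ => flow t q) := by
    apply Continuous.prodMk
    · exact (continuous_const.mul Real.continuous_cos).add (continuous_const.mul Real.continuous_sin)
    · exact (continuous_const.mul Real.continuous_sin).add (continuous_const.mul Real.continuous_cos)
  have hcu : Continuous (fun t : ℝ => u t (flow t q)) :=
    hu.comp (continuous_id.prodMk hcf)
  have hcu' : Continuous (fun t : ℝ => u' t (flow t q)) :=
    hu'.comp (continuous_id.prodMk hcf)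
  have hint : resAvg u q - resAvg u' q =
      (1 / (2 * π)) * ∫ t in (0:ℝ)..(2 * π), (u t (flow t q) - u' t (flow t q)) := by
    rw [resAvg, resAvg, ← mul_sub, intervalIntegral.integral_sub
      (hcu.intervalIntegrable _ _) (hcu'.intervalIntegrable _ _)]
  rw [hint, abs_mul]
  have hIb : |∫ t in (0:ℝ)..(2 * π), (u t (flow t q) - u' t (flow t q))| ≤ δ * |2 * π - 0| := by
    rw [← Real.norm_eq_abs]
    apply intervalIntegral.norm_integral_le_of_norm_le_const
    intro t _
    rw [Real.norm_eq_abs]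
    exact hb t (flow t q) (flow_sq' t q)
  have habs : |(1 / (2 * π) : ℝ)| = 1 / (2 * π) := abs_of_pos (by positivity)
  rw [habs]
  calc (1 / (2 * π)) * |∫ t in (0:ℝ)..(2 * π), (u t (flow t q) - u' t (flow t q))|
      ≤ (1 / (2 * π)) * (δ * |2 * π - 0|) := by
        apply mul_le_mul_of_nonneg_left hIb; positivity
    _ = δ := by
        have h2 : |2 * π - 0| = 2 * π := by
          rw [sub_zero]; exact abs_of_pos (by positivity)
        rw [h2]
        field_simp

lemma measurable_dirDeriv {w0 : ℝ → ℝ × ℝ → ℝ}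
    (hsm : ∀ t, ContDiff ℝ (⊤ : ℕ∞) (w0 t))
    (hcont : Continuous fun q : ℝ × (ℝ × ℝ) => w0 q.1 q.2)
    (γ : ℝ → ℝ × ℝ) (hγ : Continuous γ) (e : ℝ × ℝ) :
    Measurable (fun t => fderiv ℝ (w0 t) (γ t) e) := by
  set F : ℕ → ℝ → ℝ := fun n t =>
    ((n : ℝ) + 1) * (w0 t (γ t + ((n : ℝ) + 1)⁻¹ • e) - w0 t (γ t)) with hF
  have hFm : ∀ n, Measurable (F n) := by
    intro n
    have h1 : Continuous fun t => w0 t (γ t + ((n : ℝ) + 1)⁻¹ • e) :=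
      hcont.comp (continuous_id.prodMk (hγ.add continuous_const))
    have h2 : Continuous fun t => w0 t (γ t) :=
      hcont.comp (continuous_id.prodMk hγ)
    have h3 : F n = fun t => ((n : ℝ) + 1) * (w0 t (γ t + ((n : ℝ) + 1)⁻¹ • e) - w0 t (γ t)) := rfl
    rw [h3]
    exact (continuous_const.mul (h1.sub h2)).measurable
  apply measurable_of_tendsto_metrizable hFm
  rw [tendsto_pi_nhds]
  intro t
  have hcurve : HasDerivAt (fun s : ℝ => γ t + s • e) e 0 := by
    have : HasDerivAt (fun s : ℝ => s • e) ((1:ℝ) • e) 0 := (hasDerivAt_id 0).smul_const e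
    simpa using this.const_add (γ t)
  have hdiff : DifferentiableAt ℝ (w0 t) (γ t) :=
    ((hsm t).differentiable (by simp)).differentiableAt
  have hchain : HasDerivAt (fun s : ℝ => w0 t (γ t + s • e)) (fderiv ℝ (w0 t) (γ t) e) 0 := by
    have h := hdiff.hasFDerivAt
    have h2 : HasFDerivAt (w0 t) (fderiv ℝ (w0 t) (γ t)) ((fun s : ℝ => γ t + s • e) 0) := by
      simpa using h
    simpa [Function.comp_def] using h2.comp_hasDerivAt 0 hcurve
  have hslope := hasDerivAt_iff_tendsto_slope.1 hchain
  have hseq : Tendsto (fun n : ℕ => ((n : ℝ) + 1)⁻¹) atTop (𝓝[≠] (0:ℝ)) := by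
    apply tendsto_nhdsWithin_of_tendsto_nhds_of_eventually_within
    · simpa only [one_div] using (tendsto_one_div_add_atTop_nhds_zero_nat :
        Tendsto (fun n : ℕ => 1 / ((n : ℝ) + 1)) atTop (𝓝 0))
    · filter_upwards with n
      simp only [Set.mem_compl_iff, Set.mem_singleton_iff]
      positivity
  have hcomp := hslope.comp hseq
  apply hcomp.congr
  intro n
  have hne : ((n : ℝ) + 1) ≠ 0 := by positivity
  simp only [Function.comp_apply, slope_def_field, hF]
  rw [div_eq_inv_mul]
  simp only [sub_zero, inv_inv, zero_smul, add_zero]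

lemma clm_repr (L : (ℝ × ℝ) →L[ℝ] ℝ) :
    L = L (1, 0) • ContinuousLinearMap.fst ℝ ℝ ℝ + L (0, 1) • ContinuousLinearMap.snd ℝ ℝ ℝ := by
  apply ContinuousLinearMap.ext
  intro e
  have he : e = e.1 • ((1:ℝ), (0:ℝ)) + e.2 • ((0:ℝ), (1:ℝ)) := by simp [Prod.ext_iff]
  conv_lhs => rw [he]
  rw [map_add, ContinuousLinearMap.map_smul, ContinuousLinearMap.map_smul]
  simp [smul_eq_mul]
  ring

lemma resAvg_differentiableAt {w0 : ℝ → ℝ × ℝ → ℝ} {C : ℝ}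
    (hsm : ∀ t, ContDiff ℝ (⊤ : ℕ∞) (w0 t))
    (hcont : Continuous fun q : ℝ × (ℝ × ℝ) => w0 q.1 q.2)
    (hbd : ∀ t p, |pdx (w0 t) p| ≤ C ∧ |pdxi (w0 t) p| ≤ C)
    (x₀ : ℝ × ℝ) : DifferentiableAt ℝ (resAvg w0) x₀ := by
  have hC0 : 0 ≤ C := le_trans (abs_nonneg _) (hbd 0 (0, 0)).1
  set F : (ℝ × ℝ) → ℝ → ℝ := fun x t => w0 t (flow t x) with hFdef
  set F' : (ℝ × ℝ) → ℝ → ((ℝ × ℝ) →L[ℝ] ℝ) :=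
    fun x t => (fderiv ℝ (w0 t) (flow t x)).comp (rotCLM t) with hF'def
  have hflowc : ∀ x : ℝ × ℝ, Continuous fun t => flow t x := by
    intro x
    apply Continuous.prodMk
    · exact (continuous_const.mul Real.continuous_cos).add (continuous_const.mul Real.continuous_sin)
    · exact (continuous_const.mul Real.continuous_sin).add (continuous_const.mul Real.continuous_cos)
  have hFc : ∀ x : ℝ × ℝ, Continuous fun t => F x t := by
    intro x
    exact hcont.comp (continuous_id.prodMk (hflowc x))
  have hfd_bound : ∀ (t : ℝ) (q : ℝ × ℝ), ‖fderiv ℝ (w0 t) q‖ ≤ 2 * C := by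
    intro t q
    apply ContinuousLinearMap.opNorm_le_bound _ (by linarith)
    intro e
    rw [fderiv_apply_pd, Real.norm_eq_abs]
    have h1 : |e.1| ≤ ‖e‖ := by rw [← Real.norm_eq_abs]; exact norm_fst_le e
    have h2 : |e.2| ≤ ‖e‖ := by rw [← Real.norm_eq_abs]; exact norm_snd_le e
    have hb1 := (hbd t q).1
    have hb2 := (hbd t q).2
    calc |e.1 * pdx (w0 t) q + e.2 * pdxi (w0 t) q|
        ≤ |e.1 * pdx (w0 t) q| + |e.2 * pdxi (w0 t) q| := abs_add_le _ _
      _ = |e.1| * |pdx (w0 t) q| + |e.2| * |pdxi (w0 t) q| := by rw [abs_mul, abs_mul]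
      _ ≤ ‖e‖ * C + ‖e‖ * C := by
          apply add_le_add <;>
            exact mul_le_mul (by assumption) (by assumption) (abs_nonneg _) (norm_nonneg _)
      _ = 2 * C * ‖e‖ := by ring
  have hrot_bound : ∀ t : ℝ, ‖rotCLM t‖ ≤ 2 := by
    intro t
    apply ContinuousLinearMap.opNorm_le_bound _ (by norm_num)
    intro e
    rw [rotCLM_apply, Prod.norm_def]
    have h1 : |e.1| ≤ ‖e‖ := by rw [← Real.norm_eq_abs]; exact norm_fst_le e
    have h2 : |e.2| ≤ ‖e‖ := by rw [← Real.norm_eq_abs]; exact norm_snd_le e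
    have hc := abs_cos_le_one t
    have hs := abs_sin_le_one t
    apply max_le
    · rw [Real.norm_eq_abs]
      calc |e.1 * Real.cos t + e.2 * Real.sin t|
          ≤ |e.1 * Real.cos t| + |e.2 * Real.sin t| := abs_add_le _ _
        _ = |e.1| * |Real.cos t| + |e.2| * |Real.sin t| := by rw [abs_mul, abs_mul]
        _ ≤ ‖e‖ * 1 + ‖e‖ * 1 := by
            apply add_le_add <;>
              exact mul_le_mul (by assumption) (by assumption) (abs_nonneg _) (norm_nonneg _)
        _ = 2 * ‖e‖ := by ring
    · rw [Real.norm_eq_abs]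
      calc |-e.1 * Real.sin t + e.2 * Real.cos t|
          ≤ |(-e.1) * Real.sin t| + |e.2 * Real.cos t| := abs_add_le _ _
        _ = |e.1| * |Real.sin t| + |e.2| * |Real.cos t| := by
            rw [abs_mul, abs_mul, abs_neg]
        _ ≤ ‖e‖ * 1 + ‖e‖ * 1 := by
            apply add_le_add <;>
              exact mul_le_mul (by assumption) (by assumption) (abs_nonneg _) (norm_nonneg _)
        _ = 2 * ‖e‖ := by ring
  have hγ : Continuous fun t => flow t x₀ := hflowc x₀
  have hA := measurable_dirDeriv hsm hcont (fun t => flow t x₀) hγ (1, 0)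
  have hB := measurable_dirDeriv hsm hcont (fun t => flow t x₀) hγ (0, 1)
  have hc1 : Measurable fun t => (F' x₀ t) (1, 0) := by
    have heq : (fun t => (F' x₀ t) (1, 0)) = fun t =>
        Real.cos t * fderiv ℝ (w0 t) (flow t x₀) (1, 0) +
        (-Real.sin t) * fderiv ℝ (w0 t) (flow t x₀) (0, 1) := by
      funext t
      simp only [hF'def, ContinuousLinearMap.comp_apply]
      rw [rotCLM_apply]
      rw [fderiv_apply_pd]
      simp [pdx, pdxi]
    rw [heq]
    exact (Real.measurable_cos.mul hA).add ((Real.measurable_sin.neg).mul hB)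
  have hc2 : Measurable fun t => (F' x₀ t) (0, 1) := by
    have heq : (fun t => (F' x₀ t) (0, 1)) = fun t =>
        Real.sin t * fderiv ℝ (w0 t) (flow t x₀) (1, 0) +
        Real.cos t * fderiv ℝ (w0 t) (flow t x₀) (0, 1) := by
      funext t
      simp only [hF'def, ContinuousLinearMap.comp_apply]
      rw [rotCLM_apply]
      rw [fderiv_apply_pd]
      simp [pdx, pdxi]
    rw [heq]
    exact (Real.measurable_sin.mul hA).add (Real.measurable_cos.mul hB)
  have hF'sm : StronglyMeasurable (F' x₀) := by
    have hpair : StronglyMeasurable fun t => ((F' x₀ t) (1, 0), (F' x₀ t) (0, 1)) :=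
      StronglyMeasurable.prodMk (Measurable.stronglyMeasurable hc1)
        (Measurable.stronglyMeasurable hc2)
    have hcomp : Continuous fun ab : ℝ × ℝ =>
        ab.1 • ContinuousLinearMap.fst ℝ ℝ ℝ + ab.2 • ContinuousLinearMap.snd ℝ ℝ ℝ := by
      fun_prop
    have heq : F' x₀ = fun t => ((F' x₀ t) (1, 0)) • ContinuousLinearMap.fst ℝ ℝ ℝ +
        ((F' x₀ t) (0, 1)) • ContinuousLinearMap.snd ℝ ℝ ℝ := by
      funext t; exact clm_repr _
    rw [heq]
    exact hcomp.comp_stronglyMeasurable hpair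
  have key : HasFDerivAt (fun x => ∫ t in (0:ℝ)..(2 * π), F x t)
      (∫ t in (0:ℝ)..(2 * π), F' x₀ t) x₀ := by
    apply hasFDerivAt_integral_of_dominated_of_fderiv_le'' (bound := fun _ => 4 * C)
      (s := Set.univ) Filter.univ_mem
    · filter_upwards with x
      exact ((hFc x).aestronglyMeasurable).restrict
    · exact (hFc x₀).intervalIntegrable _ _
    · exact hF'sm.aestronglyMeasurable
    · filter_upwards with t
      intro x _
      calc ‖F' x t‖ ≤ ‖fderiv ℝ (w0 t) (flow t x)‖ * ‖rotCLM t‖ :=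
            ContinuousLinearMap.opNorm_comp_le _ _
        _ ≤ (2 * C) * 2 :=
            mul_le_mul (hfd_bound t _) (hrot_bound t) (norm_nonneg _) (by linarith)
        _ = 4 * C := by ring
    · exact intervalIntegrable_const
    · filter_upwards with t
      intro x _
      have heq : (fun x => F x t) = (w0 t) ∘ ⇑(rotCLM t) := by
        funext y; simp [hFdef, Function.comp, flow_eq_rot]
      rw [heq]
      have hd : HasFDerivAt (w0 t) (fderiv ℝ (w0 t) (rotCLM t x)) (rotCLM t x) :=
        (((hsm t).differentiable (by simp)) _).hasFDerivAt
      have hcompd := hd.comp x (rotCLM t).hasFDerivAt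
      simpa [hF'def, flow_eq_rot] using hcompd
  have hdi : DifferentiableAt ℝ (fun x => ∫ t in (0:ℝ)..(2 * π), F x t) x₀ :=
    key.differentiableAt
  have hre : resAvg w0 = fun p => (1 / (2 * π)) * ∫ t in (0:ℝ)..(2 * π), F p t := rfl
  rw [hre]
  exact hdi.const_mul _

/-- uniform first-derivative bound for a principal symbol. -/
lemma principal_deriv_bound {w w0 : ℝ → ℝ × ℝ → ℝ} {μ : ℝ} (hw : InC0S 0 w)
    (hsm0 : ∀ t, ContDiff ℝ (⊤ : ℕ∞) (w0 t)) (hμ : μ < 0)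
    (hrw : InC0S μ (fun t p => w t p - w0 t p)) :
    ∃ C, ∀ t p, |pdx (w0 t) p| ≤ C ∧ |pdxi (w0 t) p| ≤ C := by
  obtain ⟨C10, hC10, hb10⟩ := hw.2.2.2 1 0
  obtain ⟨C01, hC01, hb01⟩ := hw.2.2.2 0 1
  obtain ⟨D10, hD10, hd10⟩ := hrw.2.2.2 1 0
  obtain ⟨D01, hD01, hd01⟩ := hrw.2.2.2 0 1
  refine ⟨C10 + D10 + C01 + D01, fun t p => ?_⟩
  have hbase : (1:ℝ) ≤ 1 + p.1 ^ 2 + p.2 ^ 2 := by nlinarith [sq_nonneg p.1, sq_nonneg p.2]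
  have hwt : Differentiable ℝ (w t) := (hw.2.2.1 t).differentiable (by simp)
  have hrt : Differentiable ℝ (fun p => w t p - w0 t p) := (hrw.2.2.1 t).differentiable (by simp)
  have hfd : fderiv ℝ (w0 t) p = fderiv ℝ (w t) p - fderiv ℝ (fun p => w t p - w0 t p) p := by
    have hfun : w0 t = fun x => w t x - (w t x - w0 t x) := by funext x; ring
    have h2 := fderiv_sub (hwt p) (hrt p)
    rw [show (w t - fun p => w t p - w0 t p) = w0 t by funext x; simp] at h2
    exact h2
  -- bounds on w derivatives
  have hw10 : |pdx (w t) p| ≤ C10 := by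
    have h := hb10 t p
    simp only [Function.iterate_one, Function.iterate_zero, id] at h
    calc |pdx (w t) p| ≤ C10 * (1 + p.1 ^ 2 + p.2 ^ 2) ^ (0 - ((1:ℕ) + (0:ℕ) : ℝ) / 2) := by
          simpa using h
      _ ≤ C10 * 1 := by
          apply mul_le_mul_of_nonneg_left _ (le_of_lt hC10)
          apply Real.rpow_le_one_of_one_le_of_nonpos hbase
          norm_num
      _ = C10 := mul_one _
  have hw01 : |pdxi (w t) p| ≤ C01 := by
    have h := hb01 t p
    simp only [Function.iterate_one, Function.iterate_zero, id] at h
    calc |pdxi (w t) p| ≤ C01 * (1 + p.1 ^ 2 + p.2 ^ 2) ^ (0 - ((0:ℕ) + (1:ℕ) : ℝ) / 2) := by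
          simpa using h
      _ ≤ C01 * 1 := by
          apply mul_le_mul_of_nonneg_left _ (le_of_lt hC01)
          apply Real.rpow_le_one_of_one_le_of_nonpos hbase
          norm_num
      _ = C01 := mul_one _
  have hr10 : |pdx (fun p => w t p - w0 t p) p| ≤ D10 := by
    have h := hd10 t p
    simp only [Function.iterate_one, Function.iterate_zero, id] at h
    calc |pdx (fun p => w t p - w0 t p) p|
        ≤ D10 * (1 + p.1 ^ 2 + p.2 ^ 2) ^ (μ - ((1:ℕ) + (0:ℕ) : ℝ) / 2) := by simpa using h
      _ ≤ D10 * 1 := by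
          apply mul_le_mul_of_nonneg_left _ (le_of_lt hD10)
          apply Real.rpow_le_one_of_one_le_of_nonpos hbase
          push_cast; linarith
      _ = D10 := mul_one _
  have hr01 : |pdxi (fun p => w t p - w0 t p) p| ≤ D01 := by
    have h := hd01 t p
    simp only [Function.iterate_one, Function.iterate_zero, id] at h
    calc |pdxi (fun p => w t p - w0 t p) p|
        ≤ D01 * (1 + p.1 ^ 2 + p.2 ^ 2) ^ (μ - ((0:ℕ) + (1:ℕ) : ℝ) / 2) := by simpa using h
      _ ≤ D01 * 1 := by
          apply mul_le_mul_of_nonneg_left _ (le_of_lt hD01)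
          apply Real.rpow_le_one_of_one_le_of_nonpos hbase
          push_cast; linarith
      _ = D01 := mul_one _
  constructor
  · have : pdx (w0 t) p = pdx (w t) p - pdx (fun p => w t p - w0 t p) p := by
      simp only [pdx, hfd, ContinuousLinearMap.sub_apply]
    rw [this]
    calc |pdx (w t) p - pdx (fun p => w t p - w0 t p) p|
        ≤ |pdx (w t) p| + |pdx (fun p => w t p - w0 t p) p| := abs_sub _ _
      _ ≤ C10 + D10 := add_le_add hw10 hr10
      _ ≤ C10 + D10 + C01 + D01 := by linarith
  · have : pdxi (w0 t) p = pdxi (w t) p - pdxi (fun p => w t p - w0 t p) p := by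
      simp only [pdxi, hfd, ContinuousLinearMap.sub_apply]
    rw [this]
    calc |pdxi (w t) p - pdxi (fun p => w t p - w0 t p) p|
        ≤ |pdxi (w t) p| + |pdxi (fun p => w t p - w0 t p) p| := abs_sub _ _
      _ ≤ C01 + D01 := add_le_add hw01 hr01
      _ ≤ C10 + D10 + C01 + D01 := by linarith

lemma joint_cont_principal {w w0 : ℝ → ℝ × ℝ → ℝ} {μ : ℝ} (hw : InC0S 0 w)
    (hrw : InC0S μ (fun t p => w t p - w0 t p)) :
    Continuous fun q : ℝ × (ℝ × ℝ) => w0 q.1 q.2 := by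
  have heq : (fun q : ℝ × (ℝ × ℝ) => w0 q.1 q.2) =
      fun q : ℝ × (ℝ × ℝ) => w q.1 q.2 - (w q.1 q.2 - w0 q.1 q.2) := by
    funext q; ring
  rw [heq]
  exact hw.2.1.sub hrw.2.1

end VOpen

/-- The set `𝒱` is open in `(C⁰_r(𝕋,S⁰_cl), d^{0,0})`. -/
theorem V_is_open :
    ∀ v : ℝ → ℝ × ℝ → ℝ, InV v →
      ∃ ε > 0, ∀ w : ℝ → ℝ × ℝ → ℝ, InC0Scl w → dist00 v w < ε → InV w := by
  intro v hv
  obtain ⟨hv1, v0, μv, hμv, hv0sm, hv0hom, hrv, pstar, hpstar, hpbr⟩ := hv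
  have hv0cont : Continuous fun q : ℝ × (ℝ × ℝ) => v0 q.1 q.2 :=
    VOpen.joint_cont_principal hv1 hrv
  set f := resAvg v0 with hfdef
  have hdiff : DifferentiableAt ℝ f pstar := VOpen.differentiableAt_of_pbr_ne _ _ hpbr
  -- nonconstancy of f along the orbit of pstar
  obtain ⟨s0, hs0⟩ : ∃ s0 : ℝ, f (flow s0 pstar) ≠ f pstar := by
    by_contra hcon
    push_neg at hcon
    have h1 : HasDerivAt (fun s => f (flow s pstar)) (-(pbr f h0 (flow 0 pstar))) 0 :=
      VOpen.hasDerivAt_along f pstar 0 (by rw [VOpen.flow_zero]; exact hdiff)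
    have h2 : (fun s => f (flow s pstar)) = fun _ => f pstar := by
      funext s; exact hcon s
    rw [h2] at h1
    have h3 := (hasDerivAt_const (0:ℝ) (f pstar)).unique h1
    rw [VOpen.flow_zero] at h3
    exact hpbr (neg_eq_zero.mp h3.symm)
  set q1 := flow s0 pstar with hq1
  set c : ℝ := |f q1 - f pstar| with hc
  have hcpos : 0 < c := abs_pos.mpr (sub_ne_zero.mpr hs0)
  refine ⟨(c / 5) / (1 + c / 5), by positivity, ?_⟩
  intro w hw hd
  obtain ⟨hw1, w0, μw, hμw, hw0sm, hw0hom, hrw⟩ := hw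
  have hw0cont : Continuous fun q : ℝ × (ℝ × ℝ) => w0 q.1 q.2 :=
    VOpen.joint_cont_principal hw1 hrw
  -- sup-norm closeness of v and w
  obtain ⟨Cv, hCv, hbv⟩ := VOpen.InC0S_bounded hv1
  obtain ⟨Cw, hCw, hbw⟩ := VOpen.InC0S_bounded hw1
  have hsup : ∀ t p, |v t p - w t p| < c / 5 :=
    VOpen.sup_lt_of_dist00_lt (by positivity) hbv hbw hd
  -- closeness of principal symbols on |z|² ≥ 1
  have hclose : ∀ (t : ℝ) (z : ℝ × ℝ), 1 ≤ z.1 ^ 2 + z.2 ^ 2 → |v0 t z - w0 t z| ≤ c / 5 :=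
    VOpen.homog_close hμv hμw hv0hom hw0hom hrv hrw (fun t p => (hsup t p).le)
  set g := resAvg w0 with hgdef
  -- closeness of averages at q1 and pstar
  have havg : ∀ q : ℝ × ℝ, q.1 ^ 2 + q.2 ^ 2 = pstar.1 ^ 2 + pstar.2 ^ 2 →
      |f q - g q| ≤ c / 5 := by
    intro q hq
    apply VOpen.abs_resAvg_sub_le hv0cont hw0cont
    intro t z hz
    exact hclose t z (by rw [hz, hq]; exact hpstar)
  have hA1 : |f q1 - g q1| ≤ c / 5 := havg q1 (by rw [hq1]; exact VOpen.flow_sq' s0 pstar)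
  have hA2 : |f pstar - g pstar| ≤ c / 5 := havg pstar rfl
  -- g is not constant on the orbit
  have hne : g q1 ≠ g pstar := by
    intro heq
    have key : c ≤ |f q1 - g q1| + |g q1 - g pstar| + |g pstar - f pstar| := by
      rw [hc]
      have h1 : f q1 - f pstar = (f q1 - g q1) + (g q1 - g pstar) + (g pstar - f pstar) := by
        ring
      rw [h1]
      exact (abs_add_le _ _).trans (add_le_add_left (abs_add_le _ _) _)
    have hz : |g q1 - g pstar| = 0 := by rw [heq]; simp
    have hcomm : |g pstar - f pstar| = |f pstar - g pstar| := abs_sub_comm _ _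
    linarith
  -- derivative bound for w0 and differentiability of g
  obtain ⟨C, hbd⟩ := VOpen.principal_deriv_bound hw1 hw0sm hμw hrw
  have hgdiff : ∀ x : ℝ × ℝ, DifferentiableAt ℝ g x := fun x =>
    VOpen.resAvg_differentiableAt hw0sm hw0cont hbd x
  refine ⟨hw1, w0, μw, hμw, hw0sm, hw0hom, hrw, ?_⟩
  by_contra hcon
  push_neg at hcon
  -- all flow points of pstar have pbr g h0 = 0
  have hflow_ge : ∀ s : ℝ, 1 ≤ (flow s pstar).1 ^ 2 + (flow s pstar).2 ^ 2 := by
    intro s; rw [VOpen.flow_sq']; exact hpstar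
  have hD : ∀ s : ℝ, HasDerivAt (fun s => g (flow s pstar)) (-(pbr g h0 (flow s pstar))) s :=
    fun s => VOpen.hasDerivAt_along g pstar s (hgdiff _)
  have hDiff : Differentiable ℝ (fun s => g (flow s pstar)) :=
    fun s => (hD s).differentiableAt
  have hderiv0 : ∀ s : ℝ, deriv (fun s => g (flow s pstar)) s = 0 := by
    intro s
    rw [(hD s).deriv, hcon _ (hflow_ge s)]
    simp
  have hconst := is_const_of_deriv_eq_zero hDiff hderiv0 s0 0
  rw [VOpen.flow_zero] at hconst
  exact hne hconst

end
end

section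
/- Let ṽ ∈ S⁰ be real valued and assume {h₀,ṽ} is not identically zero on the set {x²+ξ² ≥ 1}. Then there exists an integer n ≥ 1 such that the 2π-periodic family v(t,x,ξ) := cos(nt)·ṽ(x,ξ) has resonant average ⟨v⟩ satisfying: {h₀,⟨v⟩} is not identically zero on the set {x²+ξ² ≥ 1}. -/
open Real MeasureTheory

noncomputable section

/-- Real valued symbol of order `ρ`. -/
def IsSymbolR (ρ : ℝ) (f : ℝ × ℝ → ℝ) : Prop :=
  ContDiff ℝ (⊤ : ℕ∞) f ∧ ∀ α β : ℕ, ∃ C > 0, ∀ p : ℝ × ℝ,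
    |pdx^[α] (pdxi^[β] f) p| ≤ C * (1 + p.1 ^ 2 + p.2 ^ 2) ^ (ρ - ((α : ℝ) + β) / 2)

namespace Res8


def J : ℝ × ℝ →L[ℝ] ℝ × ℝ := (ContinuousLinearMap.snd ℝ ℝ ℝ).prod (-(ContinuousLinearMap.fst ℝ ℝ ℝ))

def flowL (t : ℝ) : ℝ × ℝ →L[ℝ] ℝ × ℝ :=
  Real.cos t • ContinuousLinearMap.id ℝ (ℝ × ℝ) + Real.sin t • J

lemma flowL_apply (t : ℝ) (p : ℝ × ℝ) : flowL t p = flow t p := by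
  simp [flowL, J, flow, ContinuousLinearMap.prod_apply, Prod.ext_iff]
  constructor <;> ring

lemma flow_zero (p : ℝ × ℝ) : flow 0 p = p := by simp [flow]

lemma flow_add (t s : ℝ) (p : ℝ × ℝ) : flow (t + s) p = flow t (flow s p) := by
  simp [flow, Real.cos_add, Real.sin_add, Prod.ext_iff]
  constructor <;> ring

lemma flow_two_pi (p : ℝ × ℝ) : flow (2 * π) p = p := by
  simp [flow, Real.cos_two_pi, Real.sin_two_pi]

lemma flow_periodic (p : ℝ × ℝ) : Function.Periodic (fun t => flow t p) (2 * π) := by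
  intro t
  simp only [flow_add, flow_two_pi]

lemma flow_norm_sq (s : ℝ) (p : ℝ × ℝ) :
    (flow s p).1 ^ 2 + (flow s p).2 ^ 2 = p.1 ^ 2 + p.2 ^ 2 := by
  simp only [flow]
  linear_combination (p.1 ^ 2 + p.2 ^ 2) * (Real.sin_sq_add_cos_sq s)

lemma hasDerivAt_flow (t : ℝ) (p : ℝ × ℝ) :
    HasDerivAt (fun t => flow t p) (flow t (p.2, -p.1)) t := by
  have h1 : HasDerivAt (fun t => p.1 * Real.cos t + p.2 * Real.sin t)
      (p.2 * Real.cos t + -p.1 * Real.sin t) t := by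
    have := ((Real.hasDerivAt_cos t).const_mul p.1).add ((Real.hasDerivAt_sin t).const_mul p.2)
    exact this.congr_deriv (by ring)
  have h2 : HasDerivAt (fun t => -p.1 * Real.sin t + p.2 * Real.cos t)
      (-(p.2) * Real.sin t + -p.1 * Real.cos t) t := by
    have := ((Real.hasDerivAt_sin t).const_mul (-p.1)).add ((Real.hasDerivAt_cos t).const_mul p.2)
    exact this.congr_deriv (by ring)
  exact h1.prodMk h2



lemma hasFDerivAt_h0 (p : ℝ × ℝ) :
    HasFDerivAt h0 (p.1 • ContinuousLinearMap.fst ℝ ℝ ℝ + p.2 • ContinuousLinearMap.snd ℝ ℝ ℝ) p := by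
  have h1 := (((hasFDerivAt_fst (𝕜 := ℝ) (p := p)).mul (hasFDerivAt_fst (𝕜 := ℝ) (p := p))).add
      ((hasFDerivAt_snd (𝕜 := ℝ) (p := p)).mul (hasFDerivAt_snd (𝕜 := ℝ) (p := p)))).const_mul (1/2 : ℝ)
  have he : (fun q : ℝ × ℝ => (1/2 : ℝ) * (q.1 * q.1 + q.2 * q.2)) = h0 := by
    funext q; simp only [h0]; ring
  change HasFDerivAt (fun q : ℝ × ℝ => (1/2 : ℝ) * (q.1 * q.1 + q.2 * q.2)) _ p at h1
  rw [he] at h1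
  refine h1.congr_fderiv ?_
  ext w <;> simp <;> ring

lemma pdx_h0 (p : ℝ × ℝ) : pdx h0 p = p.1 := by
  simp [pdx, (hasFDerivAt_h0 p).fderiv]

lemma pdxi_h0 (p : ℝ × ℝ) : pdxi h0 p = p.2 := by
  simp [pdxi, (hasFDerivAt_h0 p).fderiv]

lemma pbr_h0_eval (f : ℝ × ℝ → ℝ) (p : ℝ × ℝ) :
    pbr h0 f p = fderiv ℝ f p (p.2, -p.1) := by
  have h : (p.2, -p.1) = p.2 • ((1:ℝ), (0:ℝ)) + (-p.1) • ((0:ℝ), (1:ℝ)) := by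
    simp [Prod.ext_iff]
  rw [pbr, pdx_h0, pdxi_h0, h, map_add, (fderiv ℝ f p).map_smul, (fderiv ℝ f p).map_smul]
  simp only [pdx, pdxi, smul_eq_mul]
  ring



lemma fderiv_bound (v : ℝ × ℝ → ℝ) (hv : IsSymbolR 0 v) :
    ∃ B > 0, ∀ p : ℝ × ℝ, ‖fderiv ℝ v p‖ ≤ B := by
  obtain ⟨C1, hC1pos, hC1⟩ := hv.2 1 0
  obtain ⟨C2, hC2pos, hC2⟩ := hv.2 0 1
  refine ⟨C1 + C2, by positivity, fun p => ?_⟩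
  have hb : ∀ p : ℝ × ℝ, ((1:ℝ) + p.1 ^ 2 + p.2 ^ 2) ^ ((0:ℝ) - ((1:ℝ) + 0) / 2) ≤ 1 := by
    intro p
    apply Real.rpow_le_one_of_one_le_of_nonpos
    · nlinarith [sq_nonneg p.1, sq_nonneg p.2]
    · norm_num
  have h1 : ∀ p : ℝ × ℝ, |fderiv ℝ v p (1, 0)| ≤ C1 := by
    intro p
    have := hC1 p
    simp only [Function.iterate_one, Function.iterate_zero, id] at this
    calc |fderiv ℝ v p (1,0)| = |pdx v p| := rfl
      _ ≤ C1 * (1 + p.1 ^ 2 + p.2 ^ 2) ^ ((0:ℝ) - ((1:ℝ) + 0) / 2) := by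
          convert this using 3 <;> norm_num
      _ ≤ C1 * 1 := by
          exact mul_le_mul_of_nonneg_left (hb p) hC1pos.le
      _ = C1 := mul_one _
  have h2 : ∀ p : ℝ × ℝ, |fderiv ℝ v p (0, 1)| ≤ C2 := by
    intro p
    have := hC2 p
    simp only [Function.iterate_one, Function.iterate_zero, id] at this
    calc |fderiv ℝ v p (0,1)| = |pdxi v p| := rfl
      _ ≤ C2 * (1 + p.1 ^ 2 + p.2 ^ 2) ^ ((0:ℝ) - ((0:ℝ) + 1) / 2) := by
          convert this using 3 <;> norm_num
      _ ≤ C2 := by nlinarith [hb p, (abs_nonneg (pdxi v p))]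
  apply ContinuousLinearMap.opNorm_le_bound _ (by positivity)
  intro w
  have e1 : |w.1| ≤ ‖w‖ := by rw [← Real.norm_eq_abs]; exact norm_fst_le w
  have e2 : |w.2| ≤ ‖w‖ := by rw [← Real.norm_eq_abs]; exact norm_snd_le w
  have hw : w = w.1 • ((1:ℝ), (0:ℝ)) + w.2 • ((0:ℝ), (1:ℝ)) := by simp [Prod.ext_iff]
  calc ‖fderiv ℝ v p w‖
      = ‖w.1 • fderiv ℝ v p (1,0) + w.2 • fderiv ℝ v p (0,1)‖ := by
        rw [← (fderiv ℝ v p).map_smul, ← (fderiv ℝ v p).map_smul, ← map_add, ← hw]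
    _ ≤ |w.1| * |fderiv ℝ v p (1,0)| + |w.2| * |fderiv ℝ v p (0,1)| := by
        refine (norm_add_le _ _).trans ?_
        simp [norm_smul, Real.norm_eq_abs]
    _ ≤ ‖w‖ * C1 + ‖w‖ * C2 := by
        have a1 := mul_le_mul e1 (h1 p) (abs_nonneg _) (norm_nonneg w)
        have a2 := mul_le_mul e2 (h2 p) (abs_nonneg _) (norm_nonneg w)
        linarith
    _ = (C1 + C2) * ‖w‖ := by ring




lemma continuous_flow_t (p : ℝ × ℝ) : Continuous (fun t => flow t p) := by
  unfold flow; fun_prop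

lemma continuous_flowL : Continuous flowL := by
  unfold flowL
  exact (Real.continuous_cos.smul continuous_const).add (Real.continuous_sin.smul continuous_const)

lemma norm_flowL_le (t : ℝ) : ‖flowL t‖ ≤ 1 + ‖J‖ := by
  have hc : ‖Real.cos t • ContinuousLinearMap.id ℝ (ℝ × ℝ)‖ ≤ 1 := by
    refine (ContinuousLinearMap.opNorm_smul_le _ _).trans ?_
    have h1 : ‖Real.cos t‖ ≤ 1 := by rw [Real.norm_eq_abs]; exact Real.abs_cos_le_one t
    have h2 : ‖ContinuousLinearMap.id ℝ (ℝ × ℝ)‖ ≤ 1 := ContinuousLinearMap.norm_id_le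
    nlinarith [norm_nonneg (Real.cos t), norm_nonneg (ContinuousLinearMap.id ℝ (ℝ × ℝ))]
  have hs : ‖Real.sin t • J‖ ≤ ‖J‖ := by
    refine (ContinuousLinearMap.opNorm_smul_le _ _).trans ?_
    have h1 : ‖Real.sin t‖ ≤ 1 := by rw [Real.norm_eq_abs]; exact Real.abs_sin_le_one t
    nlinarith [norm_nonneg (Real.sin t), norm_nonneg J]
  exact (norm_add_le _ _).trans (by linarith)

section main
variable {v : ℝ × ℝ → ℝ} {B : ℝ}

lemma hasFDerivAt_resAvg (hsm : ContDiff ℝ (⊤ : ℕ∞) v) (hB : ∀ p : ℝ × ℝ, ‖fderiv ℝ v p‖ ≤ B)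
    (n : ℕ) (p₀ : ℝ × ℝ) :
    HasFDerivAt (resAvg (fun t q => Real.cos (n * t) * v q))
      ((1 / (2 * π)) • ∫ t in (0:ℝ)..(2 * π),
        Real.cos (n * t) • ((fderiv ℝ v (flow t p₀)).comp (flowL t))) p₀ := by
  have hvd : Differentiable ℝ v := hsm.differentiable (by simp)
  have hfc : Continuous (fderiv ℝ v) := hsm.continuous_fderiv (by simp)
  have key : HasFDerivAt (fun p => ∫ t in (0:ℝ)..(2 * π), Real.cos (n * t) * v (flow t p))
      (∫ t in (0:ℝ)..(2 * π), Real.cos (n * t) • ((fderiv ℝ v (flow t p₀)).comp (flowL t))) p₀ := by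
    apply intervalIntegral.hasFDerivAt_integral_of_dominated_of_fderiv_le
      (F' := fun (x : ℝ × ℝ) (t : ℝ) => Real.cos (n * t) • ((fderiv ℝ v (flow t x)).comp (flowL t)))
      (bound := fun _ => B * (1 + ‖J‖)) (s := Metric.ball p₀ 1) (Metric.ball_mem_nhds p₀ one_pos)
    · filter_upwards with x
      exact ((Real.continuous_cos.comp (continuous_const.mul continuous_id)).mul
        (hsm.continuous.comp (continuous_flow_t x))).aestronglyMeasurable
    · exact (((Real.continuous_cos.comp (continuous_const.mul continuous_id)).mul
        (hsm.continuous.comp (continuous_flow_t p₀)))).intervalIntegrable _ _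
    · apply Continuous.aestronglyMeasurable
      apply Continuous.fun_smul
      · exact Real.continuous_cos.comp (continuous_const.mul continuous_id)
      · exact (hfc.comp (continuous_flow_t p₀)).clm_comp continuous_flowL
    · filter_upwards with t _ x _
      refine (ContinuousLinearMap.opNorm_smul_le (Real.cos (n * t)) ((fderiv ℝ v (flow t x)).comp (flowL t))).trans ?_
      have e0 : ‖Real.cos (n * t)‖ ≤ 1 := by
        rw [Real.norm_eq_abs]; exact Real.abs_cos_le_one _
      have e1 : ‖(fderiv ℝ v (flow t x)).comp (flowL t)‖ ≤ B * (1 + ‖J‖) := by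
        refine (ContinuousLinearMap.opNorm_comp_le _ _).trans ?_
        refine mul_le_mul (hB _) (norm_flowL_le t) (norm_nonneg _) ?_
        exact (norm_nonneg _).trans (hB (0,0))
      nlinarith [norm_nonneg (Real.cos (n * t)),
        norm_nonneg ((fderiv ℝ v (flow t x)).comp (flowL t)), (norm_nonneg (fderiv ℝ v (0,0))).trans (hB (0,0)), norm_nonneg J]
    · exact intervalIntegrable_const
    · filter_upwards with t _ x _
      have hflow : HasFDerivAt (fun x => flow t x) (flowL t) x := by
        have : (fun x : ℝ × ℝ => flow t x) = fun x => flowL t x := by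
          funext q; exact (flowL_apply t q).symm
        rw [this]; exact (flowL t).hasFDerivAt
      exact ((hvd (flow t x)).hasFDerivAt.comp x hflow).const_mul _
  have : resAvg (fun t q => Real.cos (n * t) * v q)
      = fun p => (1 / (2 * π)) * ∫ t in (0:ℝ)..(2 * π), Real.cos (n * t) * v (flow t p) := rfl
  rw [this]
  exact key.const_mul _

lemma bracket_formula (hsm : ContDiff ℝ (⊤ : ℕ∞) v) (hB : ∀ p : ℝ × ℝ, ‖fderiv ℝ v p‖ ≤ B)
    (n : ℕ) (q : ℝ × ℝ) :
    pbr h0 (resAvg (fun t q => Real.cos (n * t) * v q)) q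
      = (1 / (2 * π)) * ∫ t in (0:ℝ)..(2 * π),
          Real.cos (n * t) * (fderiv ℝ v (flow t q)) (flow t (q.2, -q.1)) := by
  have hfc : Continuous (fderiv ℝ v) := hsm.continuous_fderiv (by simp)
  have hint : IntervalIntegrable
      (fun t => Real.cos (n * t) • ((fderiv ℝ v (flow t q)).comp (flowL t)))
      volume 0 (2 * π) := by
    apply Continuous.intervalIntegrable
    apply Continuous.fun_smul
    · exact Real.continuous_cos.comp (continuous_const.mul continuous_id)
    · exact (hfc.comp (continuous_flow_t q)).clm_comp continuous_flowL
  rw [pbr_h0_eval, (hasFDerivAt_resAvg hsm hB n q).fderiv]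
  rw [ContinuousLinearMap.smul_apply, ContinuousLinearMap.intervalIntegral_apply hint]
  simp only [ContinuousLinearMap.smul_apply, ContinuousLinearMap.comp_apply, smul_eq_mul,
    flowL_apply]

end main


lemma fourier_vanish (w : ℝ → ℝ) (hw : Continuous w) (hper : Function.Periodic w (2 * π))
    (hC : ∀ n : ℕ, ∫ t in (0:ℝ)..(2 * π), Real.cos (n * t) * w t = 0)
    (hS : ∀ n : ℕ, ∫ t in (0:ℝ)..(2 * π), Real.sin (n * t) * w t = 0)
    (t₀ : ℝ) : w t₀ = 0 := by
  haveI : Fact (0 < 2 * π) := ⟨by positivity⟩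
  set wc : ℝ → ℂ := fun t => (w t : ℂ) with hwc_def
  have hwcont : Continuous wc := Complex.continuous_ofReal.comp hw
  have hwper : Function.Periodic wc (2 * π) := fun t => by simp [hwc_def, hper t]
  set W : AddCircle (2 * π) → ℂ := hwper.lift with hW_def
  have hWcont : Continuous W := hwcont.quotient_liftOn' _
  have hlift : ∀ t : ℝ, W (t : AddCircle (2 * π)) = wc t := fun t => hwper.lift_coe t
  -- integrals over ℤ frequencies
  have hCz : ∀ k : ℤ, ∫ t in (0:ℝ)..(2 * π), Real.cos (k * t) * w t = 0 := by
    intro k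
    rcases Int.eq_nat_or_neg k with ⟨m, rfl | rfl⟩
    · exact_mod_cast hC m
    · have : ∀ t : ℝ, Real.cos (((-(m:ℤ) : ℤ) : ℝ) * t) = Real.cos ((m : ℝ) * t) := by
        intro t; push_cast; rw [neg_mul, Real.cos_neg]
      simp only [this]
      exact hC m
  have hSz : ∀ k : ℤ, ∫ t in (0:ℝ)..(2 * π), Real.sin (k * t) * w t = 0 := by
    intro k
    rcases Int.eq_nat_or_neg k with ⟨m, rfl | rfl⟩
    · exact_mod_cast hS m
    · have : ∀ t : ℝ, Real.sin (((-(m:ℤ) : ℤ) : ℝ) * t) = -Real.sin ((m : ℝ) * t) := by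
        intro t; push_cast; rw [neg_mul, Real.sin_neg]
      simp only [this]
      simp only [neg_mul, intervalIntegral.integral_neg, hS m, neg_zero]
  -- Fourier coefficients of W vanish
  have hcoeff : ∀ k : ℤ, fourierCoeff W k = 0 := by
    intro k
    rw [fourierCoeff_eq_intervalIntegral W k 0]
    have hint : ∀ x : ℝ, (fourier (-k) (x : AddCircle (2 * π)) : ℂ) • W (x : AddCircle (2 * π))
        = ((Real.cos (k * x) * w x : ℝ) : ℂ) + ((-(Real.sin (k * x) * w x) : ℝ) : ℂ) * Complex.I := by
      intro x
      rw [hlift x, fourier_coe_apply, smul_eq_mul]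
      have hπ : (2 * (π : ℂ)) ≠ 0 := by
        simp [Real.pi_ne_zero]
      have harg : 2 * (π:ℂ) * Complex.I * (-k : ℤ) * x / ((2 * π : ℝ) : ℂ)
          = ((-(k * x) : ℝ) : ℂ) * Complex.I := by
        push_cast
        field_simp
      rw [harg, Complex.exp_mul_I]
      push_cast
      rw [Complex.cos_neg, Complex.sin_neg]
      have hwcx : wc x = ((w x : ℝ) : ℂ) := rfl
      rw [hwcx]
      ring
    simp only [hint]
    have i1 : IntervalIntegrable (fun x : ℝ => ((Real.cos (k * x) * w x : ℝ) : ℂ)) volume 0 (2 * π) := by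
      apply Continuous.intervalIntegrable
      fun_prop
    have i2 : IntervalIntegrable (fun x : ℝ => ((-(Real.sin (k * x) * w x) : ℝ) : ℂ) * Complex.I) volume 0 (2 * π) := by
      apply Continuous.intervalIntegrable
      fun_prop
    rw [zero_add, intervalIntegral.integral_add i1 i2, intervalIntegral.integral_mul_const]
    rw [intervalIntegral.integral_ofReal, intervalIntegral.integral_ofReal]
    have e1 : (∫ x in (0:ℝ)..(2*π), Real.cos (k * x) * w x) = 0 := hCz k
    have e2 : (∫ x in (0:ℝ)..(2*π), -(Real.sin (k * x) * w x)) = 0 := by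
      rw [intervalIntegral.integral_neg, hSz k, neg_zero]
    rw [e1, e2]
    simp
  set Wc : C(AddCircle (2 * π), ℂ) := ⟨W, hWcont⟩ with hWc_def
  have hrepr : fourierBasis.repr (ContinuousMap.toLp 2 AddCircle.haarAddCircle ℂ Wc) = 0 := by
    ext i
    rw [fourierBasis_repr, fourierCoeff_toLp]
    simpa [hWc_def] using hcoeff i
  have hLp : (ContinuousMap.toLp 2 AddCircle.haarAddCircle ℂ Wc) = 0 := by
    apply fourierBasis.repr.injective
    rw [hrepr, map_zero]
  have hWc0 : Wc = 0 := by
    refine ContinuousMap.toLp_injective (E := ℂ) (p := 2) (𝕜 := ℂ) AddCircle.haarAddCircle ?_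
    rw [hLp, map_zero]
  have : wc t₀ = 0 := by
    rw [← hlift t₀]
    have : W (t₀ : AddCircle (2 * π)) = Wc (t₀ : AddCircle (2 * π)) := rfl
    rw [this, hWc0]
    rfl
  simp only [hwc_def] at this
  exact_mod_cast this


section main2
variable {v : ℝ × ℝ → ℝ} {B : ℝ}

/-- integrand of the bracket formula, i.e. `d/dt v(φᵗ q)` -/
def wfun (v : ℝ × ℝ → ℝ) (q : ℝ × ℝ) (t : ℝ) : ℝ :=
  (fderiv ℝ v (flow t q)) (flow t (q.2, -q.1))

lemma continuous_wfun (hsm : ContDiff ℝ (⊤ : ℕ∞) v) (q : ℝ × ℝ) : Continuous (wfun v q) := by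
  have hfc : Continuous (fderiv ℝ v) := hsm.continuous_fderiv (by simp)
  exact (hfc.comp (continuous_flow_t q)).clm_apply (continuous_flow_t (q.2, -q.1))

lemma hasDerivAt_vflow (hsm : ContDiff ℝ (⊤ : ℕ∞) v) (q : ℝ × ℝ) (t : ℝ) :
    HasDerivAt (fun t => v (flow t q)) (wfun v q t) t :=
  ((hsm.differentiable (by simp)) (flow t q)).hasFDerivAt.comp_hasDerivAt t (hasDerivAt_flow t q)

lemma wfun_periodic (v : ℝ × ℝ → ℝ) (q : ℝ × ℝ) :
    Function.Periodic (wfun v q) (2 * π) := by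
  intro t
  unfold wfun
  have e1 : flow (t + 2 * π) q = flow t q := flow_periodic q t
  have e2 : flow (t + 2 * π) (q.2, -q.1) = flow t (q.2, -q.1) := flow_periodic (q.2, -q.1) t
  rw [e1, e2]

lemma wfun_shift (hsm : ContDiff ℝ (⊤ : ℕ∞) v) (p : ℝ × ℝ) (s t : ℝ) :
    wfun v (flow s p) t = wfun v p (t + s) := by
  have h1 := hasDerivAt_vflow hsm (flow s p) t
  have h2 : HasDerivAt (fun t => v (flow t (flow s p))) (wfun v p (t + s)) t := by
    have h3 := hasDerivAt_vflow hsm p (t + s)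
    have h4 : HasDerivAt (fun u : ℝ => u + s) 1 t := (hasDerivAt_id t).add_const s
    have h5 := h3.comp t h4
    simp only [mul_one] at h5
    have heq : ((fun u => v (flow u p)) ∘ fun u => u + s) = fun t => v (flow t (flow s p)) := by
      funext u
      simp only [Function.comp_apply, flow_add]
    rwa [heq] at h5
  exact h1.unique h2

lemma wfun_integral_zero (hsm : ContDiff ℝ (⊤ : ℕ∞) v) (q : ℝ × ℝ) :
    (∫ t in (0:ℝ)..(2 * π), wfun v q t) = 0 := by
  have h := intervalIntegral.integral_eq_sub_of_hasDerivAt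
    (a := (0:ℝ)) (b := 2 * π) (f := fun t => v (flow t q)) (f' := wfun v q)
    (fun t _ => hasDerivAt_vflow hsm q t)
    (((continuous_wfun hsm q).intervalIntegrable _ _))
  rw [h]
  show v (flow (2 * π) q) - v (flow 0 q) = 0
  rw [flow_two_pi, flow_zero, sub_self]

lemma shift_integral_eq (hsm : ContDiff ℝ (⊤ : ℕ∞) v) (p : ℝ × ℝ) (n : ℕ) (s : ℝ) :
    (∫ t in (0:ℝ)..(2 * π), Real.cos (n * t) * wfun v p (t + s))
      = Real.cos (n * s) * (∫ u in (0:ℝ)..(2 * π), Real.cos (n * u) * wfun v p u)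
        + Real.sin (n * s) * (∫ u in (0:ℝ)..(2 * π), Real.sin (n * u) * wfun v p u) := by
  set f : ℝ → ℝ := fun u => Real.cos (n * (u - s)) * wfun v p u with hf_def
  have hft : ∀ t : ℝ, Real.cos (n * t) * wfun v p (t + s) = f (t + s) := by
    intro t; simp only [hf_def, add_sub_cancel_right]
  have fper : Function.Periodic f (2 * π) := by
    intro u
    simp only [hf_def]
    have h1 : (n:ℝ) * (u + 2 * π - s) = n * (u - s) + n * (2 * π) := by ring
    rw [h1, Real.cos_add_nat_mul_two_pi, wfun_periodic v p u]
  calc (∫ t in (0:ℝ)..(2 * π), Real.cos (n * t) * wfun v p (t + s))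
      = ∫ t in (0:ℝ)..(2 * π), f (t + s) := by simp only [hft]
    _ = ∫ u in (0 + s : ℝ)..(2 * π + s), f u := intervalIntegral.integral_comp_add_right f s
    _ = ∫ u in s..(s + 2 * π), f u := by rw [zero_add, add_comm (2 * π) s]
    _ = ∫ u in (0:ℝ)..(0 + 2 * π), f u := fper.intervalIntegral_add_eq s 0
    _ = ∫ u in (0:ℝ)..(2 * π), f u := by rw [zero_add]
    _ = ∫ u in (0:ℝ)..(2 * π),
          (Real.cos (n * s) * (Real.cos (n * u) * wfun v p u)
            + Real.sin (n * s) * (Real.sin (n * u) * wfun v p u)) := by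
        apply intervalIntegral.integral_congr
        intro u _
        simp only [hf_def]
        have h1 : (n:ℝ) * (u - s) = n * u - n * s := by ring
        rw [h1, Real.cos_sub]
        ring
    _ = _ := by
        have i1 : IntervalIntegrable
            (fun u => Real.cos (n * s) * (Real.cos (n * u) * wfun v p u)) volume 0 (2 * π) := by
          apply Continuous.intervalIntegrable
          exact continuous_const.mul ((Real.continuous_cos.comp
            (continuous_const.mul continuous_id)).mul (continuous_wfun hsm p))
        have i2 : IntervalIntegrable
            (fun u => Real.sin (n * s) * (Real.sin (n * u) * wfun v p u)) volume 0 (2 * π) := by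
          apply Continuous.intervalIntegrable
          exact continuous_const.mul ((Real.continuous_sin.comp
            (continuous_const.mul continuous_id)).mul (continuous_wfun hsm p))
        rw [intervalIntegral.integral_add i1 i2, intervalIntegral.integral_const_mul,
          intervalIntegral.integral_const_mul]

end main2
end Res8


open Res8 in
/-- If `ṽ ∈ S⁰` is real valued and `{h₀,ṽ} ≢ 0` on `{x²+ξ² ≥ 1}`,
then there is `n ≥ 1` such that the family `v(t,·) := cos(nt)·ṽ` has resonant average
`⟨v⟩` with `{h₀,⟨v⟩} ≢ 0` on `{x²+ξ² ≥ 1}`. -/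
theorem exists_resonant_frequency (v : ℝ × ℝ → ℝ) (hv : IsSymbolR 0 v)
    (hnz : ∃ p : ℝ × ℝ, 1 ≤ p.1 ^ 2 + p.2 ^ 2 ∧ pbr h0 v p ≠ 0) :
    ∃ n : ℕ, 1 ≤ n ∧ ∃ p : ℝ × ℝ, 1 ≤ p.1 ^ 2 + p.2 ^ 2 ∧
      pbr h0 (resAvg (fun t q => Real.cos (n * t) * v q)) p ≠ 0 := by
  by_contra hcon
  push_neg at hcon
  obtain ⟨p, hp, hpv⟩ := hnz
  obtain ⟨B, hBpos, hB⟩ := fderiv_bound v hv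
  have hsm : ContDiff ℝ (⊤ : ℕ∞) v := hv.1
  have key : ∀ n : ℕ, 1 ≤ n → ∀ s : ℝ,
      (∫ t in (0:ℝ)..(2 * π), Real.cos (n * t) * wfun v p (t + s)) = 0 := by
    intro n hn s
    have hq : 1 ≤ (flow s p).1 ^ 2 + (flow s p).2 ^ 2 := by
      rw [flow_norm_sq]; exact hp
    have hz := hcon n hn (flow s p) hq
    rw [bracket_formula hsm hB n (flow s p)] at hz
    have h2π : (1 / (2 * π) : ℝ) ≠ 0 := by positivity
    have hz2 := (mul_eq_zero.mp hz).resolve_left h2π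
    have hcg : (∫ t in (0:ℝ)..(2 * π), Real.cos (n * t) * wfun v p (t + s))
        = ∫ t in (0:ℝ)..(2 * π), Real.cos (n * t)
            * (fderiv ℝ v (flow t (flow s p))) (flow t ((flow s p).2, -(flow s p).1)) := by
      apply intervalIntegral.integral_congr
      intro t _
      show Real.cos (n * t) * wfun v p (t + s)
          = Real.cos (n * t) * (fderiv ℝ v (flow t (flow s p))) (flow t ((flow s p).2, -(flow s p).1))
      rw [← wfun_shift hsm p s t]
      rfl
    rw [hcg]
    exact hz2
  have hC : ∀ n : ℕ, ∫ t in (0:ℝ)..(2 * π), Real.cos (n * t) * wfun v p t = 0 := by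
    intro n
    rcases Nat.eq_zero_or_pos n with rfl | hn
    · have : (∫ t in (0:ℝ)..(2 * π), Real.cos ((0:ℕ) * t) * wfun v p t)
          = ∫ t in (0:ℝ)..(2 * π), wfun v p t := by
        apply intervalIntegral.integral_congr
        intro t _
        norm_num
      rw [this, wfun_integral_zero hsm p]
    · have hk0 := key n hn 0
      rw [shift_integral_eq hsm p n 0] at hk0
      simp only [mul_zero, Real.cos_zero, Real.sin_zero, one_mul, zero_mul, add_zero] at hk0
      exact hk0
  have hS : ∀ n : ℕ, ∫ t in (0:ℝ)..(2 * π), Real.sin (n * t) * wfun v p t = 0 := by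
    intro n
    rcases Nat.eq_zero_or_pos n with rfl | hn
    · have : (∫ t in (0:ℝ)..(2 * π), Real.sin ((0:ℕ) * t) * wfun v p t)
          = ∫ t in (0:ℝ)..(2 * π), (0:ℝ) := by
        apply intervalIntegral.integral_congr
        intro t _
        norm_num
      rw [this]
      simp
    · have hk0 := key n hn (π / (2 * n))
      rw [shift_integral_eq hsm p n (π / (2 * n))] at hk0
      have hns : (n : ℝ) * (π / (2 * n)) = π / 2 := by
        field_simp
      rw [hns, Real.cos_pi_div_two, Real.sin_pi_div_two, zero_mul, one_mul, zero_add] at hk0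
      exact hk0
  have hw0 : wfun v p 0 = 0 :=
    fourier_vanish (wfun v p) (continuous_wfun hsm p) (wfun_periodic v p) hC hS 0
  apply hpv
  rw [pbr_h0_eval]
  have : fderiv ℝ v p (p.2, -p.1) = wfun v p 0 := by
    unfold wfun
    rw [flow_zero, flow_zero]
  rw [this, hw0]

end
end

section
/- Let η ∈ C^∞(ℝ²,ℝ_{≥0}) be radial with η(x,ξ) = 1 for x²+ξ² ≥ 1/2 and η(x,ξ) = 0 for x²+ξ² ≤ 1/4, and define the 2π-time-periodic symbol w₀(t,x,ξ) := cos(2t)·η(x,ξ)·xξ/(x²+ξ²) (extended by 0 at the origin). Then the resonant average satisfies ⟨w₀⟩(x,ξ) = (1/2)·η(x,ξ)·xξ/(x²+ξ²), its Poisson bracket with h₀ is {⟨w₀⟩, h₀}(x,ξ) = (1/2)·(x²−ξ²)·η(x,ξ)/(x²+ξ²), and this function is not identically zero on the set {x²+ξ² ≥ 1}. -/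
open Real MeasureTheory

noncomputable section

/-- The symbol `w₀(t,x,ξ) = cos(2t)·η(x,ξ)·xξ/(x²+ξ²)` (which is `0` at the origin,
since in Lean division by zero yields zero). -/
def w0 (η : ℝ × ℝ → ℝ) (t : ℝ) (p : ℝ × ℝ) : ℝ :=
  Real.cos (2 * t) * η p * (p.1 * p.2 / (p.1 ^ 2 + p.2 ^ 2))

/-! ### Auxiliary lemmas -/

lemma clm_apply_pair (L : ℝ × ℝ →L[ℝ] ℝ) (v : ℝ × ℝ) :
    L v = v.1 * L (1, 0) + v.2 * L (0, 1) := by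
  have hv : v = v.1 • ((1:ℝ), (0:ℝ)) + v.2 • ((0:ℝ), (1:ℝ)) := by
    simp [Prod.ext_iff]
  nth_rewrite 1 [hv]
  rw [map_add, _root_.map_smul, _root_.map_smul, smul_eq_mul, smul_eq_mul]

lemma flow_sq (t : ℝ) (p : ℝ × ℝ) :
    (flow t p).1 ^ 2 + (flow t p).2 ^ 2 = p.1 ^ 2 + p.2 ^ 2 := by
  simp only [flow]
  linear_combination (p.1 ^ 2 + p.2 ^ 2) * Real.sin_sq_add_cos_sq t

lemma key_integral (x y : ℝ) :
    ∫ t in (0:ℝ)..(2*π), Real.cos (2*t) *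
      ((x * Real.cos t + y * Real.sin t) * (-x * Real.sin t + y * Real.cos t)) =
      π * (x * y) := by
  have hderiv : ∀ t ∈ Set.uIcc (0:ℝ) (2*π), HasDerivAt
      (fun t => x*y*(t/2 + Real.sin (2*(2*t))/8) - (y^2 - x^2)/2 * (Real.cos (2*(2*t))/8))
      (Real.cos (2*t) * ((x * Real.cos t + y * Real.sin t) * (-x * Real.sin t + y * Real.cos t))) t := by
    intro t _
    have h4 : HasDerivAt (fun t : ℝ => 2*(2*t)) (2*(2*1)) t :=
      ((hasDerivAt_id t).const_mul 2).const_mul 2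
    have hsin : HasDerivAt (fun t : ℝ => Real.sin (2*(2*t))) (Real.cos (2*(2*t)) * (2*(2*1))) t :=
      (Real.hasDerivAt_sin _).comp t h4
    have hcos : HasDerivAt (fun t : ℝ => Real.cos (2*(2*t))) (-Real.sin (2*(2*t)) * (2*(2*1))) t :=
      (Real.hasDerivAt_cos _).comp t h4
    have H := ((((hasDerivAt_id t).div_const 2).add (hsin.div_const 8)).const_mul (x*y)).sub
      ((hcos.div_const 8).const_mul ((y^2-x^2)/2))
    refine H.congr_deriv ?_
    rw [Real.cos_two_mul (2*t), Real.sin_two_mul (2*t), Real.sin_two_mul t, Real.cos_two_mul' t]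
    ring
  rw [intervalIntegral.integral_eq_sub_of_hasDerivAt hderiv
    ((Continuous.intervalIntegrable (by fun_prop) _ _))]
  have h1 : (2:ℝ)*(2*(2*π)) = (8:ℕ)*π := by push_cast; ring
  have h2 : ((8:ℕ):ℝ)*π = ((4:ℕ):ℝ)*(2*π) := by push_cast; ring
  rw [h1, Real.sin_nat_mul_pi, h2, Real.cos_nat_mul_two_pi]
  norm_num
  ring

lemma h0_eq : h0 = fun q : ℝ × ℝ => (1/2:ℝ) * (q.1*q.1 + q.2*q.2) := by
  funext q; simp only [h0]; ring

lemma hasFDerivAt_h0 (p : ℝ × ℝ) : HasFDerivAt h0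
    ((1/2:ℝ) • ((p.1 • ContinuousLinearMap.fst ℝ ℝ ℝ + p.1 • ContinuousLinearMap.fst ℝ ℝ ℝ) +
      (p.2 • ContinuousLinearMap.snd ℝ ℝ ℝ + p.2 • ContinuousLinearMap.snd ℝ ℝ ℝ))) p := by
  rw [h0_eq]
  exact ((hasFDerivAt_fst.mul hasFDerivAt_fst).add
    (hasFDerivAt_snd.mul hasFDerivAt_snd)).const_mul (1/2)

lemma pdx_h0 (p : ℝ × ℝ) : pdx h0 p = p.1 := by
  simp only [pdx, (hasFDerivAt_h0 p).fderiv]; simp; ring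

lemma pdxi_h0 (p : ℝ × ℝ) : pdxi h0 p = p.2 := by
  simp only [pdxi, (hasFDerivAt_h0 p).fderiv]; simp; ring

/-- For a radial smooth nonnegative cutoff `η` vanishing near the
origin and equal to `1` for `x²+ξ² ≥ 1/2`, the resonant average of
`w₀ = cos(2t)·η·xξ/(x²+ξ²)` equals `(1/2)·η·xξ/(x²+ξ²)`, its Poisson bracket with `h₀`
equals `(1/2)·(x²−ξ²)·η/(x²+ξ²)`, and the latter is not identically zero on
`{x²+ξ² ≥ 1}`. -/
theorem dense_perturbation_symbol (η : ℝ × ℝ → ℝ) (hη : ContDiff ℝ (⊤ : ℕ∞) η)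
    (hnonneg : ∀ p : ℝ × ℝ, 0 ≤ η p)
    (hradial : ∃ η₀ : ℝ → ℝ, ∀ p : ℝ × ℝ, η p = η₀ (p.1 ^ 2 + p.2 ^ 2))
    (hone : ∀ p : ℝ × ℝ, 1 / 2 ≤ p.1 ^ 2 + p.2 ^ 2 → η p = 1)
    (hzero : ∀ p : ℝ × ℝ, p.1 ^ 2 + p.2 ^ 2 ≤ 1 / 4 → η p = 0) :
    (∀ p : ℝ × ℝ,
      resAvg (w0 η) p = 1 / 2 * η p * (p.1 * p.2 / (p.1 ^ 2 + p.2 ^ 2))) ∧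
    (∀ p : ℝ × ℝ,
      pbr (resAvg (w0 η)) h0 p =
        1 / 2 * (p.1 ^ 2 - p.2 ^ 2) * η p / (p.1 ^ 2 + p.2 ^ 2)) ∧
    (∃ p : ℝ × ℝ, 1 ≤ p.1 ^ 2 + p.2 ^ 2 ∧
      1 / 2 * (p.1 ^ 2 - p.2 ^ 2) * η p / (p.1 ^ 2 + p.2 ^ 2) ≠ 0) := by
  obtain ⟨η₀, hη₀⟩ := hradial
  -- η is invariant under the flow
  have hflowη : ∀ t (p : ℝ × ℝ), η (flow t p) = η p := by
    intro t p
    rw [hη₀, hη₀ p, flow_sq]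
  -- Part 1
  have part1 : ∀ p : ℝ × ℝ,
      resAvg (w0 η) p = 1 / 2 * η p * (p.1 * p.2 / (p.1 ^ 2 + p.2 ^ 2)) := by
    intro p
    have hint : ∀ t : ℝ, w0 η t (flow t p) =
        (η p / (p.1 ^ 2 + p.2 ^ 2)) * (Real.cos (2*t) *
          ((p.1 * Real.cos t + p.2 * Real.sin t) * (-p.1 * Real.sin t + p.2 * Real.cos t))) := by
      intro t
      have h := hflowη t p
      have hs := flow_sq t p
      simp only [w0, flow] at h hs ⊢
      rw [h, hs]
      ring
    unfold resAvg
    simp only [hint]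
    rw [intervalIntegral.integral_const_mul, key_integral p.1 p.2]
    rw [show (1/(2*π)) * (η p / (p.1^2+p.2^2) * (π * (p.1 * p.2))) =
      (π/π) * (1/2 * η p * (p.1 * p.2 / (p.1^2+p.2^2))) from by ring,
      div_self Real.pi_ne_zero, one_mul]
  refine ⟨part1, ?_, ?_⟩
  · -- Part 2
    have hgfun : resAvg (w0 η) =
        fun q : ℝ×ℝ => 1/2 * η q * (q.1*q.2 * (q.1*q.1+q.2*q.2)⁻¹) := by
      funext q
      rw [part1 q]
      ring
    intro p
    rw [hgfun]
    unfold pbr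
    rw [pdx_h0, pdxi_h0]
    by_cases hp : p.1 ^ 2 + p.2 ^ 2 = 0
    · -- near the origin the function vanishes identically
      have hx1 : p.1 = 0 := by nlinarith [sq_nonneg p.1, sq_nonneg p.2]
      have hx2 : p.2 = 0 := by nlinarith [sq_nonneg p.1, sq_nonneg p.2]
      have hev : (fun q : ℝ×ℝ => 1/2 * η q * (q.1*q.2 * (q.1*q.1+q.2*q.2)⁻¹))
          =ᶠ[nhds p] (fun _ => (0:ℝ)) := by
        have hball : Metric.ball p (1/4) ∈ nhds p := Metric.ball_mem_nhds _ (by norm_num)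
        filter_upwards [hball] with q hq
        have hq' : dist q p < 1/4 := by simpa [Metric.mem_ball] using hq
        rw [Prod.dist_eq] at hq'
        have h1 : dist q.1 p.1 < 1/4 := lt_of_le_of_lt (le_max_left _ _) hq'
        have h2 : dist q.2 p.2 < 1/4 := lt_of_le_of_lt (le_max_right _ _) hq'
        rw [Real.dist_eq, hx1, sub_zero] at h1
        rw [Real.dist_eq, hx2, sub_zero] at h2
        have : q.1 ^ 2 + q.2 ^ 2 ≤ 1/4 := by
          have e1 : q.1 ^ 2 = |q.1| ^ 2 := (sq_abs q.1).symm
          have e2 : q.2 ^ 2 = |q.2| ^ 2 := (sq_abs q.2).symm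
          nlinarith [abs_nonneg q.1, abs_nonneg q.2]
        rw [hzero q this]
        ring
      have hfz : fderiv ℝ (fun q : ℝ×ℝ => 1/2 * η q * (q.1*q.2 * (q.1*q.1+q.2*q.2)⁻¹)) p = 0 := by
        rw [hev.fderiv_eq]
        exact fderiv_const_apply 0
      simp only [pdx, pdxi, hfz]
      simp [hx1, hx2]
    · -- away from the origin: explicit derivative computation
      have hne : p.1*p.1 + p.2*p.2 ≠ 0 := by intro h; apply hp; rw [← h]; ring
      -- angular invariance of η
      have hab : p.2 * fderiv ℝ η p (1,0) + (-p.1) * fderiv ℝ η p (0,1) = 0 := by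
        have hconst : (fun t => η (flow t p)) = fun _ => η p := by
          funext t; exact hflowη t p
        have h1 : HasDerivAt (fun t => p.1 * Real.cos t + p.2 * Real.sin t) p.2 0 := by
          have := ((Real.hasDerivAt_cos 0).const_mul p.1).add
            ((Real.hasDerivAt_sin 0).const_mul p.2)
          exact this.congr_deriv (by simp)
        have h2 : HasDerivAt (fun t => -p.1 * Real.sin t + p.2 * Real.cos t) (-p.1) 0 := by
          have := ((Real.hasDerivAt_sin 0).const_mul (-p.1)).add
            ((Real.hasDerivAt_cos 0).const_mul p.2)
          exact this.congr_deriv (by simp)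
        have hflowd : HasDerivAt (fun t => flow t p) (p.2, -p.1) 0 := h1.prodMk h2
        have hη' : HasFDerivAt η (fderiv ℝ η p) (flow 0 p) := by
          rw [show flow 0 p = p from by simp [flow]]
          exact (hη.differentiable (by simp) p).hasFDerivAt
        have hcomp : HasDerivAt (fun t => η (flow t p)) (fderiv ℝ η p (p.2, -p.1)) 0 :=
          hη'.comp_hasDerivAt 0 hflowd
        rw [hconst] at hcomp
        have := hcomp.unique (hasDerivAt_const 0 _)
        rw [clm_apply_pair] at this
        simpa using this
      have hηd : HasFDerivAt η (fderiv ℝ η p) p := (hη.differentiable (by simp) p).hasFDerivAt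
      have hden := (hasFDerivAt_fst.mul hasFDerivAt_fst).add
        ((hasFDerivAt_snd (𝕜:=ℝ) (E:=ℝ) (F:=ℝ) (p:=p)).mul hasFDerivAt_snd)
      have hinv := (hasFDerivAt_inv' (𝕜:=ℝ) hne).comp p hden
      have hG' : HasFDerivAt (fun q : ℝ×ℝ => 1/2 * η q * (q.1*q.2 * (q.1*q.1+q.2*q.2)⁻¹))
          ((1 / 2 * η p) •
            ((p.1 * p.2) •
                (-(ContinuousLinearMap.mulLeftRight ℝ ℝ (p.1 * p.1 + p.2 * p.2)⁻¹
                    (p.1 * p.1 + p.2 * p.2)⁻¹)).comp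
                  (p.1 • ContinuousLinearMap.fst ℝ ℝ ℝ + p.1 • ContinuousLinearMap.fst ℝ ℝ ℝ +
                    (p.2 • ContinuousLinearMap.snd ℝ ℝ ℝ + p.2 • ContinuousLinearMap.snd ℝ ℝ ℝ)) +
              ((p.1 * p.1 + p.2 * p.2)⁻¹) •
                (p.1 • ContinuousLinearMap.snd ℝ ℝ ℝ + p.2 • ContinuousLinearMap.fst ℝ ℝ ℝ)) +
            (p.1 * p.2 * (p.1 * p.1 + p.2 * p.2)⁻¹) • (1 / 2 : ℝ) • fderiv ℝ η p) p :=
        (hηd.const_mul (1/2:ℝ)).mul ((hasFDerivAt_fst.mul hasFDerivAt_snd).mul hinv)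
      simp only [pdx, pdxi, hG'.fderiv]
      simp only [ContinuousLinearMap.add_apply, ContinuousLinearMap.smul_apply,
        ContinuousLinearMap.comp_apply, ContinuousLinearMap.neg_apply,
        ContinuousLinearMap.mulLeftRight_apply, ContinuousLinearMap.coe_fst',
        ContinuousLinearMap.coe_snd', smul_eq_mul]
      field_simp
      linear_combination (-p.1 * p.2 * (p.1^2+p.2^2)) * hab
  · -- Part 3
    refine ⟨(1, 0), by norm_num, ?_⟩
    have h1 : η ((1:ℝ), (0:ℝ)) = 1 := hone (1, 0) (by norm_num)
    norm_num [h1]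

end
end
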